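/- arXiv:2005.10025 — 7 statements merged into one kernel-verified Lean document; each statement's English description precedes it below -/
import Mathlib

section
/- Let m, n be integers with n odd and gcd(4m+1, n) = 1, and let E be the elliptic curve over ℚ defined by y² + xy = x³ + m·x² + n·x (this is an elliptic curve since its discriminant n²·((4m+1)² − 64n) is odd, hence nonzero). Then the group E(ℚ) contains a point Q of order two with Q ≠ (0,0) if and only if there exists an odd integer d with gcd(4m+1, d) = 1 such that n = −d·(4m+1+16d). -/
/-!
A point of order two is fixed by `(x, y) ↦ (x, -y - x)`, so `y = -x/2`, and the curve equation
becomes `x · (4x² + (4m+1)x + 4n) = 0`. For a root `x ≠ 0`, `u = 4x` is a root of the monic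
`u² + (4m+1)u + 16n`, hence an integer. Of the two roots `u` and `-(u + 4m + 1)` exactly one is
even, and since their product is `16n` it is `16d` for some `d`, which gives
`n = -d(4m+1+16d)`. Conversely `(4d, -2d)` is such a point; `d` inherits oddness and coprimality
to `4m+1` from `n` because it divides `n`.
-/

/-- The Weierstrass curve `y² + xy = x³ + m·x² + n·x` over `ℚ`, i.e. the Weierstrass curve
with coefficients `(a₁, a₂, a₃, a₄, a₆) = (1, m, 0, n, 0)`. -/
def Wmn (m n : ℤ) : WeierstrassCurve ℚ :=
  { a₁ := 1, a₂ := (m : ℚ), a₃ := 0, a₄ := (n : ℚ), a₆ := 0 }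

open Polynomial in
theorem Rat.exists_intCast_eq_of_sq_add_mul_add_eq_zero {q : ℚ} {a b : ℤ}
    (h : q ^ 2 + a * q + b = 0) : ∃ u : ℤ, (u : ℚ) = q := by
  have hmonic : (X ^ 2 + C a * X + C b : ℤ[X]).Monic := by monicity!
  exact isInteger_of_is_root_of_monic hmonic (by simpa using h)

theorem Int.exists_eq_neg_mul_of_sq_add_mul_add_sixteen_mul_eq_zero {k n u : ℤ} (hk : Odd k)
    (hu : u ^ 2 + k * u + 16 * n = 0) : ∃ d : ℤ, n = -d * (k + 16 * d) := by
  have sixteen_dvd {a b : ℤ} (hb : ¬ 2 ∣ b) (hab : a * b = 16 * -n) : 16 ∣ a :=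
    Int.prime_two.pow_dvd_of_dvd_mul_right 4 hb ⟨-n, hab⟩
  obtain ⟨v, ⟨d, rfl⟩, hv⟩ : ∃ v, 16 ∣ v ∧ v ^ 2 + k * v + 16 * n = 0 := by
    rcases Int.even_or_odd u with hu_even | hu_odd
    · refine ⟨u, sixteen_dvd (b := u + k) ?_ (by linear_combination hu), hu⟩
      rw [← even_iff_two_dvd, Int.not_even_iff_odd]
      exact hu_even.add_odd hk
    · refine ⟨-(u + k), (sixteen_dvd (b := u) ?_ (by linear_combination hu)).neg_right, ?_⟩
      · rwa [← even_iff_two_dvd, Int.not_even_iff_odd]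
      · linear_combination hu
  exact ⟨d, by linarith⟩

namespace WeierstrassCurve.Affine.Point

variable {F : Type*} [Field F] [DecidableEq F] {W : WeierstrassCurve.Affine F}

theorem addOrderOf_some_eq_two_iff {x y : F} (h : W.Nonsingular x y) :
    addOrderOf (some x y h) = 2 ↔ y = W.negY x y := by
  rw [addOrderOf_eq_prime_iff, two_nsmul]
  refine ⟨fun ⟨h2, _⟩ ↦ ?_, fun hy ↦ ⟨add_self_of_Y_eq hy, some_ne_zero h⟩⟩
  by_contra hy
  exact some_ne_zero _ ((add_self_of_Y_ne hy).symm.trans h2)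

end WeierstrassCurve.Affine.Point

namespace Wmn

open WeierstrassCurve.Affine WeierstrassCurve.Affine.Point

variable {m n : ℤ}

theorem Δ_eq : (Wmn m n).Δ = n ^ 2 * ((4 * m + 1) ^ 2 - 64 * n) := by
  simp only [WeierstrassCurve.Δ, WeierstrassCurve.b₂, WeierstrassCurve.b₄,
    WeierstrassCurve.b₆, WeierstrassCurve.b₈, Wmn]
  ring

theorem Δ_ne_zero (hn : Odd n) : (Wmn m n).Δ ≠ 0 := by
  have hodd : Odd (n ^ 2 * ((4 * m + 1) ^ 2 - 64 * n)) :=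
    hn.pow.mul ((Odd.pow ⟨2 * m, by ring⟩).sub_even ⟨32 * n, by ring⟩)
  have hne : n ^ 2 * ((4 * m + 1) ^ 2 - 64 * n) ≠ 0 :=
    fun h ↦ Int.not_even_iff_odd.mpr hodd (h ▸ Even.zero)
  rw [Δ_eq]
  exact_mod_cast hne

theorem equation_iff {x y : ℚ} :
    (Wmn m n).toAffine.Equation x y ↔ y ^ 2 + x * y = x ^ 3 + m * x ^ 2 + n * x := by
  simp [WeierstrassCurve.Affine.equation_iff, Wmn]

theorem negY_eq (x y : ℚ) : (Wmn m n).toAffine.negY x y = -y - x := by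
  simp [WeierstrassCurve.Affine.negY, Wmn]

theorem exists_addOrderOf_eq_two_ne_iff (hΔ : (Wmn m n).Δ ≠ 0) :
    (∃ Q : (Wmn m n).toAffine.Point, addOrderOf Q = 2 ∧
      ∀ h₀ : (Wmn m n).toAffine.Nonsingular 0 0, Q ≠ some 0 0 h₀) ↔
    ∃ x : ℚ, 4 * x ^ 2 + (4 * m + 1) * x + 4 * n = 0 := by
  have hn : (n : ℚ) ≠ 0 := by rintro hn; simp [Δ_eq, hn] at hΔ
  constructor
  · rintro ⟨_ | @⟨x, y, h⟩, hQ, hne⟩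
    · rw [← zero_def, addOrderOf_zero] at hQ
      exact absurd hQ (by norm_num)
    · rw [addOrderOf_some_eq_two_iff, negY_eq] at hQ
      have hx : x ≠ 0 := by
        rintro rfl
        obtain rfl : y = 0 := by linarith
        exact hne h rfl
      refine ⟨x, (mul_eq_zero.mp ?_).resolve_left hx⟩
      linear_combination (-4 : ℚ) * equation_iff.mp h.1 + (x + 2 * y) * hQ
  · rintro ⟨x, hx⟩
    have hx0 : x ≠ 0 := by rintro rfl; exact hn (by linarith)
    have hns : (Wmn m n).toAffine.Nonsingular x (-x / 2) := by
      rw [← equation_iff_nonsingular_of_Δ_ne_zero hΔ, equation_iff]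
      linear_combination (-x / 4) * hx
    refine ⟨some x (-x / 2) hns, ?_, fun _ heq ↦ hx0 (some.inj heq).1⟩
    rw [addOrderOf_some_eq_two_iff, negY_eq]
    ring

end Wmn

/-- Let `m, n` be integers with `n` odd and `gcd(4m+1, n) = 1`, and let `E` be the elliptic
curve over `ℚ` defined by `y² + xy = x³ + m·x² + n·x`.  Then the group `E(ℚ)` contains a point
`Q` of order two with `Q ≠ (0,0)` if and only if there exists an odd integer `d` with
`gcd(4m+1, d) = 1` such that `n = −d·(4m+1+16d)`. -/
theorem stmt_0 (m n : ℤ) (hn : Odd n) (hgcd : Int.gcd (4 * m + 1) n = 1) :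
    (∃ Q : (Wmn m n).toAffine.Point, addOrderOf Q = 2 ∧
      ∀ h₀ : (Wmn m n).toAffine.Nonsingular 0 0,
        Q ≠ WeierstrassCurve.Affine.Point.some 0 0 h₀) ↔
    ∃ d : ℤ, Odd d ∧ Int.gcd (4 * m + 1) d = 1 ∧ n = -d * (4 * m + 1 + 16 * d) := by
  rw [Wmn.exists_addOrderOf_eq_two_ne_iff (Wmn.Δ_ne_zero hn)]
  constructor
  · rintro ⟨x, hx⟩
    obtain ⟨u, hu⟩ := Rat.exists_intCast_eq_of_sq_add_mul_add_eq_zero (q := 4 * x)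
      (a := 4 * m + 1) (b := 16 * n) (by push_cast; linear_combination 4 * hx)
    have hu' : u ^ 2 + (4 * m + 1) * u + 16 * n = 0 := by
      have : (u : ℚ) ^ 2 + (4 * m + 1) * u + 16 * n = 0 := by
        rw [hu]; linear_combination 4 * hx
      exact_mod_cast this
    obtain ⟨d, hnd⟩ := Int.exists_eq_neg_mul_of_sq_add_mul_add_sixteen_mul_eq_zero
      ⟨2 * m, by ring⟩ hu'
    have hdn : n = d * -(4 * m + 1 + 16 * d) := by rw [hnd]; ring
    refine ⟨d, (Int.odd_mul.mp (hdn ▸ hn)).1, ?_, hnd⟩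
    rw [← Int.isCoprime_iff_gcd_eq_one] at hgcd ⊢
    exact hgcd.of_isCoprime_of_dvd_right ⟨_, hdn⟩
  · rintro ⟨d, -, -, rfl⟩
    exact ⟨4 * d, by push_cast; ring⟩
end

section
/- Let m, d be integers with d odd and gcd(4m+1, d) = 1, set n = −d·(4m+1+16d), and let E be the elliptic curve over ℚ defined by y² + xy = x³ + m·x² + n·x. Then E(ℚ) has exactly three points of order two, namely P = (0,0), Q = (4d, −2d) and S = (−(4m+1+16d)/4, (4m+1+16d)/8), and moreover P + Q = S in the group law of E(ℚ). -/
open WeierstrassCurve WeierstrassCurve.Affine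

lemma WeierstrassCurve.Affine.Point.addOrderOf_some_eq_two_iff_s1 {F : Type*} [Field F]
    [DecidableEq F] {W : Affine F} {x y : F} (h : W.Nonsingular x y) :
    addOrderOf (Point.some x y h) = 2 ↔ y = W.negY x y := by
  rw [addOrderOf_eq_prime_iff, two_nsmul, add_eq_zero_iff_eq_neg, Point.neg_some,
    Point.some.injEq]
  simp only [true_and, and_iff_left (Point.some_ne_zero h)]

section Wmn

variable {m n : ℤ}

lemma Wmn_negY (x y : ℚ) : (Wmn m n).toAffine.negY x y = -y - x := by
  simp [Wmn]

lemma Wmn_equation_iff (x y : ℚ) :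
    (Wmn m n).toAffine.Equation x y ↔ y ^ 2 + x * y = x ^ 3 + m * x ^ 2 + n * x := by
  rw [Affine.equation_iff]
  simp [Wmn]

lemma Wmn_Δ : (Wmn m n).Δ = (n : ℚ) ^ 2 * ((4 * m + 1) ^ 2 - 64 * n) := by
  simp only [Wmn, WeierstrassCurve.Δ, b₂, b₄, b₆, b₈]
  ring

variable {d : ℤ}

lemma Wmn_Δ_ne_zero (hd : Odd d) (hn : n = -d * (4 * m + 1 + 16 * d)) : (Wmn m n).Δ ≠ 0 := by
  have hd' := Int.odd_iff.mp hd
  have hA : 4 * m + 1 + 16 * d ≠ 0 := by omega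
  have hB : 4 * m + 1 + 32 * d ≠ 0 := by omega
  have hn0 : n ≠ 0 := hn ▸ mul_ne_zero (neg_ne_zero.mpr (by omega)) hA
  have hdisc : ((4 * m + 1) ^ 2 - 64 * n : ℚ) = ((4 * m + 1 + 32 * d : ℤ) : ℚ) ^ 2 := by
    rw [hn]; push_cast; ring
  rw [Wmn_Δ, hdisc]
  exact mul_ne_zero (pow_ne_zero _ (Int.cast_ne_zero.mpr hn0))
    (pow_ne_zero _ (Int.cast_ne_zero.mpr hB))

lemma Wmn_equation_and_eq_negY_iff (hn : n = -d * (4 * m + 1 + 16 * d)) {x y : ℚ} :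
    (Wmn m n).toAffine.Equation x y ∧ y = (Wmn m n).toAffine.negY x y ↔
      x = 0 ∧ y = 0 ∨ x = 4 * d ∧ y = -2 * d ∨
        x = -(4 * m + 1 + 16 * d) / 4 ∧ y = (4 * m + 1 + 16 * d) / 8 := by
  have hcubic : y = -x / 2 → ((Wmn m n).toAffine.Equation x y ↔
      x * (x - 4 * d) * (x + (4 * m + 1 + 16 * d) / 4) = 0) := by
    rintro rfl
    rw [Wmn_equation_iff, hn]
    push_cast
    constructor <;> intro h <;> linear_combination (-1 : ℚ) * h
  have hy : y = -y - x ↔ y = -x / 2 := by constructor <;> intro <;> linarith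
  rw [Wmn_negY, and_comm, hy]
  constructor
  · rintro ⟨rfl, h⟩
    rw [hcubic rfl, mul_eq_zero, mul_eq_zero, sub_eq_zero, add_eq_zero_iff_eq_neg] at h
    rcases h with (rfl | rfl) | rfl
    · simp
    · right; left; constructor <;> ring
    · right; right; constructor <;> ring
  · rintro (⟨rfl, rfl⟩ | ⟨rfl, rfl⟩ | ⟨rfl, rfl⟩) <;>
      exact ⟨by ring, (hcubic (by ring)).mpr (by ring)⟩

lemma Wmn_some_add_some (hd : d ≠ 0) (hP : (Wmn m n).toAffine.Nonsingular 0 0)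
    (hQ : (Wmn m n).toAffine.Nonsingular (4 * d) (-2 * d))
    (hS : (Wmn m n).toAffine.Nonsingular (-(4 * m + 1 + 16 * d) / 4)
      ((4 * m + 1 + 16 * d) / 8)) :
    Point.some _ _ hP + Point.some _ _ hQ = Point.some _ _ hS := by
  have hx : (0 : ℚ) ≠ 4 * d := by simpa [eq_comm] using hd
  rw [Point.add_of_X_ne hx, Point.some.injEq, slope_of_X_ne hx]
  simp only [Affine.addX, Affine.addY, Affine.negAddY, Affine.negY, Wmn]
  constructor <;> field_simp <;> ring

end Wmn

theorem stmt_1_general (m d n : ℤ) (hd : Odd d)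
    (hn : n = -d * (4 * m + 1 + 16 * d)) :
    ∃ (hP : (Wmn m n).toAffine.Nonsingular 0 0)
      (hQ : (Wmn m n).toAffine.Nonsingular ((4 * d : ℤ) : ℚ) ((-2 * d : ℤ) : ℚ))
      (hS : (Wmn m n).toAffine.Nonsingular
        (-((4 * m + 1 + 16 * d : ℤ) : ℚ) / 4) (((4 * m + 1 + 16 * d : ℤ) : ℚ) / 8)),
      {T : (Wmn m n).toAffine.Point | addOrderOf T = 2} =
        {WeierstrassCurve.Affine.Point.some _ _ hP, WeierstrassCurve.Affine.Point.some _ _ hQ,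
          WeierstrassCurve.Affine.Point.some _ _ hS} ∧
      WeierstrassCurve.Affine.Point.some _ _ hP + WeierstrassCurve.Affine.Point.some _ _ hQ =
        WeierstrassCurve.Affine.Point.some _ _ hS := by
  push_cast
  have hnonsing {x y : ℚ} (hxy : _) : (Wmn m n).toAffine.Nonsingular x y :=
    (equation_iff_nonsingular_of_Δ_ne_zero (Wmn_Δ_ne_zero hd hn)).mp
      ((Wmn_equation_and_eq_negY_iff hn).mpr hxy).1
  have hP := hnonsing (Or.inl ⟨rfl, rfl⟩)
  have hQ := hnonsing (Or.inr (Or.inl ⟨rfl, rfl⟩))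
  have hS := hnonsing (Or.inr (Or.inr ⟨rfl, rfl⟩))
  refine ⟨hP, hQ, hS, ?_, Wmn_some_add_some (by rintro rfl; simp at hd) hP hQ hS⟩
  ext (_ | ⟨x, y, h⟩)
  · simp [← Point.zero_def]
  · simp only [Set.mem_ofPred_eq, Set.mem_insert_iff, Set.mem_singleton_iff, Point.some.injEq,
      Point.addOrderOf_some_eq_two_iff_s1, ← Wmn_equation_and_eq_negY_iff hn, h.1, true_and]

/-- Let `m, d` be integers with `d` odd and `gcd(4m+1, d) = 1`, set `n = −d·(4m+1+16d)`, and
let `E` be the elliptic curve over `ℚ` defined by `y² + xy = x³ + m·x² + n·x`.  Then `E(ℚ)`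
has exactly three points of order two, namely `P = (0,0)`, `Q = (4d, −2d)` and
`S = (−(4m+1+16d)/4, (4m+1+16d)/8)`, and moreover `P + Q = S` in the group law of `E(ℚ)`. -/
theorem stmt_1 (m d n : ℤ) (hd : Odd d) (hgcd : Int.gcd (4 * m + 1) d = 1)
    (hn : n = -d * (4 * m + 1 + 16 * d)) :
    ∃ (hP : (Wmn m n).toAffine.Nonsingular 0 0)
      (hQ : (Wmn m n).toAffine.Nonsingular ((4 * d : ℤ) : ℚ) ((-2 * d : ℤ) : ℚ))
      (hS : (Wmn m n).toAffine.Nonsingular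
        (-((4 * m + 1 + 16 * d : ℤ) : ℚ) / 4) (((4 * m + 1 + 16 * d : ℤ) : ℚ) / 8)),
      {T : (Wmn m n).toAffine.Point | addOrderOf T = 2} =
        {WeierstrassCurve.Affine.Point.some _ _ hP, WeierstrassCurve.Affine.Point.some _ _ hQ,
          WeierstrassCurve.Affine.Point.some _ _ hS} ∧
      WeierstrassCurve.Affine.Point.some _ _ hP + WeierstrassCurve.Affine.Point.some _ _ hQ =
        WeierstrassCurve.Affine.Point.some _ _ hS :=
  stmt_1_general m d n hd hn
end

section
/- Let m, n be integers with n odd and gcd(4m+1, n) = 1, and set Δ = n²·((4m+1)² − 64n) (which is odd, hence nonzero). Then the p-adic valuation of Δ is even for every prime p if and only if there exists an odd integer d with gcd(4m+1, d) = 1 such that n = −d·(4m+1+16d). -/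
/-!
Write `a = 4m + 1` and `X = a² − 64n`. Since `n ≠ 0`, every valuation of `Δ = n²X` is even
exactly when `|X|` is a perfect square, and as `X ≡ 1 (mod 4)` this forces `X = s²` itself.
Then `(a − s)(a + s) = 64n` with `n` odd; choosing the sign of `s` with `a ≡ s (mod 4)` makes
`(a + s)/2` odd, so `32 ∣ a − s`, and `d = (s − a)/32` satisfies `a² − 64n = (a + 32d)²`, which
is `n = −d(a + 16d)`. Conversely, that identity makes `Δ = (n(a + 32d))²` a square.
-/

lemma Nat.isSquare_of_forall_even_factorization {N : ℕ} (hN : N ≠ 0)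
    (h : ∀ p, Even (N.factorization p)) : IsSquare N := by
  refine ⟨N.factorization.prod fun p e => p ^ (e / 2), ?_⟩
  conv_lhs => rw [← Nat.prod_factorization_pow_eq_self hN]
  rw [Finsupp.prod, Finsupp.prod, ← Finset.prod_mul_distrib]
  refine Finset.prod_congr rfl fun p _ => ?_
  rw [← pow_add, ← two_mul, Nat.two_mul_div_two_of_even (h p)]

lemma Int.isSquare_natAbs_of_forall_even_padicValInt {N : ℤ} (hN : N ≠ 0)
    (h : ∀ p : ℕ, p.Prime → Even (padicValInt p N)) : IsSquare N.natAbs := by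
  refine Nat.isSquare_of_forall_even_factorization (Int.natAbs_ne_zero.mpr hN) fun p => ?_
  by_cases hp : p.Prime
  · rw [Nat.factorization_def _ hp]
    exact h p hp
  · rw [Nat.factorization_eq_zero_of_not_prime _ hp]
    exact Even.zero

lemma padicValInt_sq (p : ℕ) [Fact p.Prime] (x : ℤ) :
    padicValInt p (x ^ 2) = 2 * padicValInt p x := by
  simp only [padicValInt, Int.natAbs_pow, padicValNat.pow]

lemma even_padicValInt_of_even_padicValInt_sq_mul {p : ℕ} [Fact p.Prime] {n X : ℤ}
    (hn : n ≠ 0) (hX : X ≠ 0) (h : Even (padicValInt p (n ^ 2 * X))) :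
    Even (padicValInt p X) := by
  rw [padicValInt.mul (pow_ne_zero 2 hn) hX, padicValInt_sq] at h
  exact (Nat.even_add.mp h).mp (even_two_mul _)

lemma Int.exists_eq_sq_of_isSquare_natAbs {X : ℤ} (hsq : IsSquare X.natAbs) (hX : X % 4 = 1) :
    ∃ s, X = s ^ 2 := by
  obtain ⟨r, hr⟩ := hsq
  rcases Int.natAbs_eq X with h | h
  · exact ⟨r, by rw [h, hr]; push_cast; ring⟩
  · rw [h, hr] at hX
    push_cast at hX
    rcases Int.even_or_odd' (r : ℤ) with ⟨k, hk | hk⟩ <;> rw [hk] at hX <;> ring_nf at hX <;>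
      omega

lemma thirtyTwo_dvd_sub_of_sq_sub_sq_eq {a t n : ℤ} (ht : Odd t) (h4 : 4 ∣ a - t)
    (h : a ^ 2 - t ^ 2 = 64 * n) : 32 ∣ a - t := by
  obtain ⟨w, hw, hw_odd⟩ : ∃ w, a + t = 2 * w ∧ Odd w := by
    obtain ⟨k, hk⟩ := h4
    obtain ⟨j, hj⟩ := ht
    exact ⟨2 * (k + j) + 1, by omega, odd_two_mul_add_one _⟩
  have hdvd : (2 : ℤ) ^ 5 ∣ (a - t) * w := by
    refine ⟨n, mul_left_cancel₀ two_ne_zero ?_⟩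
    linear_combination h - (a - t) * hw
  exact (Int.isCoprime_two_left.mpr hw_odd).pow_left.dvd_of_dvd_mul_right hdvd

lemma exists_eq_neg_mul_of_sq_sub_sixtyFour_mul_eq_sq {a n s : ℤ} (ha : Odd a)
    (h : a ^ 2 - 64 * n = s ^ 2) : ∃ d, n = -d * (a + 16 * d) := by
  have hs : Odd s := by
    obtain ⟨k, rfl⟩ := ha
    have : Odd (s ^ 2) := ⟨2 * k ^ 2 + 2 * k - 32 * n, by rw [← h]; ring⟩
    exact Int.odd_pow.mp this |>.resolve_right two_ne_zero
  obtain ⟨t, ht, hts, hat⟩ : ∃ t, Odd t ∧ t ^ 2 = s ^ 2 ∧ 4 ∣ a - t := by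
    have := Int.odd_iff.mp ha
    have := Int.odd_iff.mp hs
    rcases (by omega : 4 ∣ a - s ∨ 4 ∣ a - -s) with h4 | h4
    · exact ⟨s, hs, rfl, h4⟩
    · exact ⟨-s, hs.neg, by ring, h4⟩
  obtain ⟨c, hc⟩ :=
    thirtyTwo_dvd_sub_of_sq_sub_sq_eq (n := n) ht hat (by linear_combination h - hts)
  refine ⟨-c, mul_left_cancel₀ (by norm_num : (64 : ℤ) ≠ 0) ?_⟩
  linear_combination -h + hts + (a - 32 * c + t) * hc

/-- Let `m, n` be integers with `n` odd and `gcd(4m+1, n) = 1`, and set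
`Δ = n²·((4m+1)² − 64n)` (which is odd, hence nonzero).  Then the `p`-adic valuation of `Δ`
is even for every prime `p` if and only if there exists an odd integer `d` with
`gcd(4m+1, d) = 1` such that `n = −d·(4m+1+16d)`. -/
theorem stmt_2 (m n : ℤ) (hn : Odd n) (hgcd : Int.gcd (4 * m + 1) n = 1) :
    (∀ p : ℕ, p.Prime → Even (padicValInt p (n ^ 2 * ((4 * m + 1) ^ 2 - 64 * n)))) ↔
    ∃ d : ℤ, Odd d ∧ Int.gcd (4 * m + 1) d = 1 ∧ n = -d * (4 * m + 1 + 16 * d) := by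
  set a := 4 * m + 1
  have ha : Odd a := ⟨2 * m, by ring⟩
  constructor
  · intro h
    have hn0 : n ≠ 0 := by rintro rfl; simp at hn
    have hX : (a ^ 2 - 64 * n) % 4 = 1 := by
      rw [show a ^ 2 - 64 * n = 4 * (4 * m ^ 2 + 2 * m - 16 * n) + 1 by ring]
      omega
    have hX0 : a ^ 2 - 64 * n ≠ 0 := by omega
    obtain ⟨s, hs⟩ := Int.exists_eq_sq_of_isSquare_natAbs
      (Int.isSquare_natAbs_of_forall_even_padicValInt hX0 fun p hp =>
        haveI := Fact.mk hp
        even_padicValInt_of_even_padicValInt_sq_mul hn0 hX0 (h p hp)) hX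
    obtain ⟨d, rfl⟩ := exists_eq_neg_mul_of_sq_sub_sixtyFour_mul_eq_sq ha hs
    refine ⟨d, odd_neg.mp (Int.odd_mul.mp hn).1, ?_, rfl⟩
    rw [← Int.isCoprime_iff_gcd_eq_one] at hgcd ⊢
    exact hgcd.of_isCoprime_of_dvd_right ⟨-(a + 16 * d), by ring⟩
  · rintro ⟨d, -, -, rfl⟩ p hp
    have := Fact.mk hp
    rw [show _ ^ 2 * (a ^ 2 - 64 * _) = (-d * (a + 16 * d) * (a + 32 * d)) ^ 2 by ring,
      padicValInt_sq]
    exact even_two_mul _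
end

section
/- Let m, n, d be integers with n = 1 or n = −1, and suppose n = −d·(4m+1+16d). Then either (m, n, d) = (−4, −1, 1) or (m, n, d) = (4, 1, −1). In particular, the only Weierstrass curves y² + xy = x³ + m·x² + n·x with n = ±1 admitting such a decomposition are y² + xy = x³ − 4x² − x and y² + xy = x³ + 4x² + x. -/
/-- Let `m, n, d` be integers with `n = 1` or `n = −1`, and suppose
`n = −d·(4m+1+16d)`.  Then either `(m, n, d) = (−4, −1, 1)` or `(m, n, d) = (4, 1, −1)`.
In particular, the only Weierstrass curves `y² + xy = x³ + m·x² + n·x` with `n = ±1`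
admitting such a decomposition are `y² + xy = x³ − 4x² − x` and `y² + xy = x³ + 4x² + x`. -/
theorem stmt_4 (m n d : ℤ) (hn : n = 1 ∨ n = -1) (h : n = -d * (4 * m + 1 + 16 * d)) :
    (m = -4 ∧ n = -1 ∧ d = 1) ∨ (m = 4 ∧ n = 1 ∧ d = -1) := by
  have hdn : d ∣ n := ⟨-(4 * m + 1 + 16 * d), by linarith [h, mul_comm d (-(4 * m + 1 + 16 * d))]⟩
  have hd1 : d ∣ (1 : ℤ) := by rcases hn with h1 | h1 <;> simp [h1] at hdn <;>
    exact hdn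
  have hd : d = 1 ∨ d = -1 := Int.isUnit_iff.mp (isUnit_of_dvd_one hd1)
  rcases hd with hd | hd <;> subst hd <;> rcases hn with h1 | h1 <;> omega
end

section
/- Let R be a commutative ring and a₂, a₄ ∈ R, and let Δ and c₄ be the discriminant and c₄-invariant of the Weierstrass curve y² + xy = x³ + a₂·x² + a₄·x over R. Then the ideals (Δ, c₄) and (4a₂+1, a₄) of R have the same radical. -/
/-- The Weierstrass curve `y² + xy = x³ + a₂·x² + a₄·x` over a commutative ring `R`,
i.e. the Weierstrass curve with coefficients `(a₁, a₂, a₃, a₄, a₆) = (1, a₂, 0, a₄, 0)`. -/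
def Wc {R : Type*} [CommRing R] (a₂ a₄ : R) : WeierstrassCurve R :=
  { a₁ := 1, a₂ := a₂, a₃ := 0, a₄ := a₄, a₆ := 0 }

theorem Wc_Δ {R : Type*} [CommRing R] (a₂ a₄ : R) :
    (Wc a₂ a₄).Δ = a₄ ^ 2 * ((4 * a₂ + 1) ^ 2 - 64 * a₄) := by
  simp only [Wc, WeierstrassCurve.Δ, WeierstrassCurve.b₂, WeierstrassCurve.b₄,
    WeierstrassCurve.b₆, WeierstrassCurve.b₈]
  ring

theorem Wc_c₄ {R : Type*} [CommRing R] (a₂ a₄ : R) :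
    (Wc a₂ a₄).c₄ = (4 * a₂ + 1) ^ 2 - 48 * a₄ := by
  simp only [Wc, WeierstrassCurve.c₄, WeierstrassCurve.b₂, WeierstrassCurve.b₄]
  ring

/-- Let `R` be a commutative ring and `a₂, a₄ ∈ R`, and let `Δ` and `c₄` be the discriminant
and `c₄`-invariant of the Weierstrass curve `y² + xy = x³ + a₂·x² + a₄·x` over `R`.  Then the
ideals `(Δ, c₄)` and `(4a₂+1, a₄)` of `R` have the same radical. -/
theorem stmt_8 (R : Type*) [CommRing R] (a₂ a₄ : R) :
    (Ideal.span {(Wc a₂ a₄).Δ, (Wc a₂ a₄).c₄}).radical =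
      (Ideal.span {4 * a₂ + 1, a₄}).radical := by
  set u : R := 4 * a₂ + 1 with hu
  set v : R := a₄ with hv
  rw [Wc_Δ, Wc_c₄]
  apply le_antisymm
  · rw [Ideal.radical_le_radical_iff, Ideal.span_le]
    rintro x (rfl | rfl)
    · apply Ideal.le_radical
      rw [Ideal.mem_span_pair]
      exact ⟨0, v * (u ^ 2 - 64 * v), by ring⟩
    · apply Ideal.le_radical
      rw [Ideal.mem_span_pair]
      exact ⟨u, -48, by ring⟩
  · rw [Ideal.radical_le_radical_iff, Ideal.span_le]
    set J := (Ideal.span {v ^ 2 * (u ^ 2 - 64 * v), u ^ 2 - 48 * v}).radical with hJ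
    have hΔ : v ^ 2 * (u ^ 2 - 64 * v) ∈ J :=
      Ideal.le_radical (Ideal.subset_span (by simp))
    have hc : u ^ 2 - 48 * v ∈ J :=
      Ideal.le_radical (Ideal.subset_span (by simp))
    have humem : u ∈ J := by
      rw [Ideal.mem_radical_iff]
      refine ⟨6, ?_⟩
      rw [Ideal.mem_span_pair]
      exact ⟨-6912, (u ^ 2 - 48 * v) ^ 2 + 144 * v * (u ^ 2 - 48 * v) + 13824 * v ^ 2, by ring⟩
    have hvmem : v ∈ J := by
      have h3 : v ^ 3 ∈ J := by
        have : v ^ 3 = u * (v ^ 3 * (4 - 6 * u + 4 * u ^ 2 - u ^ 3))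
            + 16 * a₂ ^ 4 * v ^ 2 * (u ^ 2 - 48 * v)
            - 16 * a₂ ^ 4 * (v ^ 2 * (u ^ 2 - 64 * v)) := by rw [hu]; ring
        rw [this]
        exact sub_mem (add_mem (J.mul_mem_right _ humem) (J.mul_mem_left _ hc))
          (J.mul_mem_left _ hΔ)
      have : v ∈ J.radical := Ideal.mem_radical_iff.mpr ⟨3, h3⟩
      rwa [Ideal.radical_idem] at this
    rintro x (rfl | rfl)
    · exact humem
    · exact hvmem
end

section
/- Let R be a commutative ring in which 2 is a regular element (a non-zero-divisor) and in which every unit of the form 1 + 2a (a ∈ R) equals 1 or −1. Let a₂, a₄, a₂', a₄' ∈ R and suppose an admissible change of Weierstrass coordinates x = u²x' + r, y = u³y' + s·u²x' + t (u a unit, r, s, t ∈ R) transforms the curve y² + xy = x³ + a₂x² + a₄x into y² + x y = x³ + a₂'x² + a₄'x, and that it fixes the point (0,0), i.e. r = 0 and t = 0. Then a₂' = a₂ and a₄' = a₄, and the change of coordinates is either the identity (u = 1, s = 0) or the sign involution x = x', y = −y' − x' (u = −1, s = −1). -/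
namespace WeierstrassCurve

variable {R : Type*} [CommRing R]

lemma VariableChange.u_mul_smul_a₁ (C : VariableChange R) (W : WeierstrassCurve R) :
    C.u * (C • W).a₁ = W.a₁ + 2 * C.s := by
  rw [variableChange_a₁, ← mul_assoc, ← Units.val_mul, mul_inv_cancel, Units.val_one, one_mul]

lemma negVariableChange_smul_self (W : WeierstrassCurve R) :
    (⟨-1, 0, -W.a₁, -W.a₃⟩ : VariableChange R) • W = W := by
  ext <;> simp only [variableChange_a₁, variableChange_a₂, variableChange_a₃, variableChange_a₄,
    variableChange_a₆, inv_neg, inv_one, Units.val_neg, Units.val_one] <;> ring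

end WeierstrassCurve

open WeierstrassCurve

/-- Let `R` be a commutative ring in which `2` is a regular element and in which every unit
of the form `1 + 2a` (`a ∈ R`) equals `1` or `−1`.  Suppose an admissible change of
Weierstrass coordinates `x = u²x' + r`, `y = u³y' + s·u²x' + t` transforms the curve
`y² + xy = x³ + a₂x² + a₄x` into `y² + xy = x³ + a₂'x² + a₄'x`, and that it fixes the point
`(0,0)`, i.e. `r = 0` and `t = 0`.  Then `a₂' = a₂` and `a₄' = a₄`, and the change of
coordinates is either the identity (`u = 1, s = 0`) or the sign involution
`x = x', y = −y' − x'` (`u = −1, s = −1`). -/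
theorem stmt_9 (R : Type*) [CommRing R] (h2 : IsRegular (2 : R))
    (hu : ∀ u : Rˣ, ∀ a : R, (u : R) = 1 + 2 * a → (u : R) = 1 ∨ (u : R) = -1)
    (a₂ a₄ a₂' a₄' : R) (C : WeierstrassCurve.VariableChange R)
    (hr : C.r = 0) (ht : C.t = 0)
    (h : C • (Wc a₂ a₄) = Wc a₂' a₄') :
    a₂' = a₂ ∧ a₄' = a₄ ∧
      (C = ⟨1, 0, 0, 0⟩ ∨ C = ⟨-1, 0, -1, 0⟩) := by
  obtain ⟨u, r, s, t⟩ := C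
  obtain rfl : r = 0 := hr
  obtain rfl : t = 0 := ht
  have hus : (u : R) = 1 + 2 * s := by
    have := VariableChange.u_mul_smul_a₁ ⟨u, 0, s, 0⟩ (Wc a₂ a₄)
    rwa [h, Wc, Wc, mul_one] at this
  have hC : (⟨u, 0, s, 0⟩ : VariableChange R) = ⟨1, 0, 0, 0⟩ ∨
      (⟨u, 0, s, 0⟩ : VariableChange R) = ⟨-1, 0, -1, 0⟩ := by
    rcases hu u s hus with hu1 | hu1
    · obtain rfl : s = 0 := h2.left (by linear_combination hu1 - hus : 2 * s = 2 * 0)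
      obtain rfl : u = 1 := Units.ext hu1
      exact .inl rfl
    · obtain rfl : s = -1 := h2.left (by linear_combination hu1 - hus : 2 * s = 2 * -1)
      obtain rfl : u = -1 := Units.ext (by rw [hu1, Units.val_neg, Units.val_one])
      exact .inr rfl
  have hfix : (⟨u, 0, s, 0⟩ : VariableChange R) • Wc a₂ a₄ = Wc a₂ a₄ := by
    rcases hC with hC | hC <;> rw [hC]
    · exact one_smul _ _
    · simpa [Wc] using negVariableChange_smul_self (Wc a₂ a₄)
  rw [hfix] at h
  simp only [Wc, mk.injEq, true_and, and_true] at h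
  exact ⟨h.1.symm, h.2.symm, hC⟩
end

section
/- Let m, d be integers with d odd and gcd(4m+1, d) = 1, set n = −d·(4m+1+16d), and let p be an odd prime. Let (x₀, y₀) ∈ 𝔽_p × 𝔽_p be given by x₀ = −(4m+1+16d)·4⁻¹ and y₀ = (4m+1+16d)·8⁻¹ (inverses taken in 𝔽_p). Then (x₀, y₀) is a singular point of the reduction modulo p of the Weierstrass curve y² + xy = x³ + m·x² + n·x if and only if p divides (4m+1+16d)·(4m+1+32d). (Here one uses the integer identity 16m² + 192md + 8m + 512d² + 48d + 1 = (4m+1+16d)·(4m+1+32d).) -/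
/-!
With `a = 4m+1+16d` the point is `(x₀, y₀) = (-a/4, a/8)`, which makes sense as soon as `2` is
invertible. The `y`-partial `2y₀ + x₀` vanishes identically, the Weierstrass equation at the point
reduces to `n = -d·a`, and the `x`-partial `y₀ - (3x₀² + 2m·x₀ + n)` equals `-a(4m+1+32d)/16`.
So the point is always on the curve, and it is singular exactly when `a(4m+1+32d) = 0` in `𝔽_p`.
-/

/-- The Weierstrass curve `y² + xy = x³ + m·x² + n·x` over `ℤ`. -/
def WmnZ (m n : ℤ) : WeierstrassCurve ℤ :=
  { a₁ := 1, a₂ := m, a₃ := 0, a₄ := n, a₆ := 0 }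

section

variable {F : Type*} [Field F] (m d : ℤ)

lemma WmnZ_map_equation_twoTorsion (h2 : (2 : F) ≠ 0) :
    ((WmnZ m (-d * (4 * m + 1 + 16 * d))).map (Int.castRingHom F)).toAffine.Equation
      (-((4 * m + 1 + 16 * d : ℤ) : F) * 4⁻¹) (((4 * m + 1 + 16 * d : ℤ) : F) * 8⁻¹) := by
  have h4 : (4 : F) ≠ 0 := by simpa [show (4 : F) = 2 ^ 2 by norm_num] using h2
  have h8 : (8 : F) ≠ 0 := by simpa [show (8 : F) = 2 ^ 3 by norm_num] using h2
  rw [WeierstrassCurve.Affine.equation_iff]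
  simp only [WmnZ, WeierstrassCurve.map, map_one, map_zero, eq_intCast]
  push_cast
  field_simp
  ring

lemma WmnZ_map_nonsingular_twoTorsion_iff (h2 : (2 : F) ≠ 0) :
    ((WmnZ m (-d * (4 * m + 1 + 16 * d))).map (Int.castRingHom F)).toAffine.Nonsingular
      (-((4 * m + 1 + 16 * d : ℤ) : F) * 4⁻¹) (((4 * m + 1 + 16 * d : ℤ) : F) * 8⁻¹) ↔
    (((4 * m + 1 + 16 * d) * (4 * m + 1 + 32 * d) : ℤ) : F) ≠ 0 := by
  have h4 : (4 : F) ≠ 0 := by simpa [show (4 : F) = 2 ^ 2 by norm_num] using h2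
  have h8 : (8 : F) ≠ 0 := by simpa [show (8 : F) = 2 ^ 3 by norm_num] using h2
  have h16 : (16 : F) ≠ 0 := by simpa [show (16 : F) = 2 ^ 4 by norm_num] using h2
  rw [WeierstrassCurve.Affine.nonsingular_iff',
    and_iff_right (WmnZ_map_equation_twoTorsion m d h2)]
  simp only [WmnZ, WeierstrassCurve.map, map_one, map_zero, eq_intCast]
  have partialX_eq : 1 * (((4 * m + 1 + 16 * d : ℤ) : F) * 8⁻¹) -
      (3 * (-((4 * m + 1 + 16 * d : ℤ) : F) * 4⁻¹) ^ 2 +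
        2 * (m : F) * (-((4 * m + 1 + 16 * d : ℤ) : F) * 4⁻¹) +
        ((-d * (4 * m + 1 + 16 * d) : ℤ) : F)) =
      -(((4 * m + 1 + 16 * d) * (4 * m + 1 + 32 * d) : ℤ) : F) * 16⁻¹ := by
    push_cast
    field_simp
    ring
  have partialY_eq : 2 * (((4 * m + 1 + 16 * d : ℤ) : F) * 8⁻¹) +
      1 * (-((4 * m + 1 + 16 * d : ℤ) : F) * 4⁻¹) + 0 = 0 := by
    field_simp
    ring
  rw [partialX_eq, partialY_eq]
  simp [h16]

end

theorem stmt_17_general (m d : ℤ)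
    (n : ℤ) (hn : n = -d * (4 * m + 1 + 16 * d)) (p : ℕ) (hp : p.Prime) (hp2 : p ≠ 2) :
    (((WmnZ m n).map (Int.castRingHom (ZMod p))).toAffine.Equation
        (-((4 * m + 1 + 16 * d : ℤ) : ZMod p) * (4 : ZMod p)⁻¹)
        (((4 * m + 1 + 16 * d : ℤ) : ZMod p) * (8 : ZMod p)⁻¹) ∧
      ¬ ((WmnZ m n).map (Int.castRingHom (ZMod p))).toAffine.Nonsingular
        (-((4 * m + 1 + 16 * d : ℤ) : ZMod p) * (4 : ZMod p)⁻¹)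
        (((4 * m + 1 + 16 * d : ℤ) : ZMod p) * (8 : ZMod p)⁻¹)) ↔
    (p : ℤ) ∣ (4 * m + 1 + 16 * d) * (4 * m + 1 + 32 * d) := by
  have : Fact p.Prime := ⟨hp⟩
  have h2 : (2 : ZMod p) ≠ 0 := Ring.two_ne_zero (by rwa [ZMod.ringChar_zmod_n])
  subst hn
  rw [WmnZ_map_nonsingular_twoTorsion_iff m d h2, not_not, ← ZMod.intCast_zmod_eq_zero_iff_dvd]
  exact and_iff_right (WmnZ_map_equation_twoTorsion m d h2)

/-- Let `m, d` be integers with `d` odd and `gcd(4m+1, d) = 1`, set `n = −d·(4m+1+16d)`, and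
let `p` be an odd prime.  Let `(x₀, y₀) ∈ 𝔽_p × 𝔽_p` be given by
`x₀ = −(4m+1+16d)·4⁻¹` and `y₀ = (4m+1+16d)·8⁻¹` (inverses taken in `𝔽_p`).  Then
`(x₀, y₀)` is a singular point of the reduction modulo `p` of the Weierstrass curve
`y² + xy = x³ + m·x² + n·x` if and only if `p` divides `(4m+1+16d)·(4m+1+32d)`. -/
theorem stmt_17 (m d : ℤ) (hd : Odd d) (hgcd : Int.gcd (4 * m + 1) d = 1)
    (n : ℤ) (hn : n = -d * (4 * m + 1 + 16 * d)) (p : ℕ) (hp : p.Prime) (hp2 : p ≠ 2) :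
    (((WmnZ m n).map (Int.castRingHom (ZMod p))).toAffine.Equation
        (-((4 * m + 1 + 16 * d : ℤ) : ZMod p) * (4 : ZMod p)⁻¹)
        (((4 * m + 1 + 16 * d : ℤ) : ZMod p) * (8 : ZMod p)⁻¹) ∧
      ¬ ((WmnZ m n).map (Int.castRingHom (ZMod p))).toAffine.Nonsingular
        (-((4 * m + 1 + 16 * d : ℤ) : ZMod p) * (4 : ZMod p)⁻¹)
        (((4 * m + 1 + 16 * d : ℤ) : ZMod p) * (8 : ZMod p)⁻¹)) ↔
    (p : ℤ) ∣ (4 * m + 1 + 16 * d) * (4 * m + 1 + 32 * d) :=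
  stmt_17_general m d n hn p hp hp2
end
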